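/- Let φ(r) = 1 + 2e^{2r} + e^{4r} − (−1 + e^{2r} + 2e^{4r})·r, and let r* ∈ (0,1) be such that φ(r*) = 0 while φ(r) > 0 for all r ∈ [0, r*) (numerically r* ≈ 0.7074, the smallest positive root of φ). Then for every complex number z with |z| < r*, one has Re( 1 + z·𝔅''(z)/𝔅'(z) ) > 0; that is, 𝔅 is convex on the disk |z| < r*. -/

import Mathlib

open Complex Metric

/-- The bean function 𝔅(z) = (1 + tanh z)^(1/2), principal branch of the complex power. -/
noncomputable def Bean (z : ℂ) : ℂ := (1 + Complex.tanh z) ^ ((1:ℂ)/2)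

/-- The open unit disk in ℂ. -/
def unitDisk : Set ℂ := Metric.ball (0:ℂ) 1

/-- `Subord p g` : p is subordinate to g on the unit disk. -/
def Subord (p g : ℂ → ℂ) : Prop :=
  ∃ ω : ℂ → ℂ, AnalyticOnNhd ℂ ω unitDisk ∧ ω 0 = 0 ∧
    (∀ z ∈ unitDisk, ‖ω z‖ < 1) ∧ ∀ z ∈ unitDisk, p z = g (ω z)


/-- φ(r) = 1 + 2e^{2r} + e^{4r} − (−1 + e^{2r} + 2e^{4r})·r. -/
noncomputable def beanPhi (r : ℝ) : ℝ :=
  1 + 2 * Real.exp (2*r) + Real.exp (4*r)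
    - (-1 + Real.exp (2*r) + 2 * Real.exp (4*r)) * r

/-!
For `z = x + iy` and `t = tanh z` one has `𝔅' = (1 - t) 𝔅 / 2`, `𝔅''/𝔅' = -(1 + 3t)/2` and
`tanh z = (sinh 2x + i sin 2y) / (cosh 2x + cos 2y)`, hence
`2 (cosh 2x + cos 2y) Re(1 + z𝔅''/𝔅') = (2 - x)(cosh 2x + cos 2y) - 3x sinh 2x + 3y sin 2y`.
If `x² + y² < R`, the bounds `cos 2y ≥ 1 - 2y²` and `y sin 2y ≥ 0` make this exceed `beanPsi R x`.
Take `R = r*²`: since `φ(x) = e^{2x} beanPsi (x²) x`, `beanPsi R` vanishes at `r*`; it is positive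
on `[0, 1/2]`, decreasing on `[1/2, ∞)` and larger at `-x` than at `x ≥ 0`, hence nonnegative on
`[-r*, r*]`. All of this only needs `r* < 3/4`, which holds because `φ(3/4) < 0`, i.e.
`e^{3/2} > 7/2`.
-/

open ComplexConjugate

noncomputable def beanPsi (R x : ℝ) : ℝ :=
  (2 - x) * (1 + Real.cosh (2 * x) - 2 * (R - x ^ 2)) - 3 * x * Real.sinh (2 * x)

lemma beanPhi_eq_exp_mul_beanPsi (x : ℝ) : beanPhi x = Real.exp (2 * x) * beanPsi (x ^ 2) x := by
  rw [beanPhi, beanPsi, Real.cosh_eq, Real.sinh_eq, show 4 * x = 2 * x + 2 * x by ring,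
    Real.exp_add, Real.exp_neg]
  field_simp
  ring

lemma beanPhi_three_quarters_neg : beanPhi (3 / 4) < 0 := by
  have hE : 7 / 2 < Real.exp (3 / 2) := by
    linarith [Real.quadratic_le_exp_of_nonneg (x := 3 / 2) (by norm_num)]
  have hphi : beanPhi (3 / 4) = -(2 * Real.exp (3 / 2) - 7) * (Real.exp (3 / 2) + 1) / 4 := by
    rw [beanPhi, show 2 * (3 / 4 : ℝ) = 3 / 2 by norm_num,
      show 4 * (3 / 4 : ℝ) = 3 / 2 + 3 / 2 by norm_num, Real.exp_add]
    ring
  rw [hphi]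
  nlinarith [Real.exp_pos (3 / 2)]

lemma lt_three_quarters_of_beanPhi_eq_zero {r : ℝ} (hroot : beanPhi r = 0)
    (hpos : ∀ s : ℝ, 0 ≤ s → s < r → 0 < beanPhi s) : r < 3 / 4 := by
  by_contra! h
  rcases h.eq_or_lt with h | h
  · linarith [h ▸ beanPhi_three_quarters_neg]
  · linarith [hpos (3 / 4) (by norm_num) h, beanPhi_three_quarters_neg]

lemma beanPsi_pos_of_le_half {R x : ℝ} (hR : R ≤ 9 / 16) (hx₀ : 0 ≤ x) (hx : x ≤ 1 / 2) :
    0 < beanPsi R x := by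
  have hsinh := mul_le_mul_of_nonneg_left (Real.sinh_lt_cosh (2 * x)).le (by positivity : 0 ≤ 3 * x)
  have hcosh := mul_le_mul_of_nonneg_left (Real.one_le_cosh (2 * x)) (by linarith : 0 ≤ 2 - 4 * x)
  have hRx := mul_le_mul_of_nonneg_left hR (by linarith : 0 ≤ 2 - x)
  rw [beanPsi]
  nlinarith

lemma hasDerivAt_beanPsi (R x : ℝ) :
    HasDerivAt (beanPsi R) (-1 + 2 * R + 8 * x - 6 * x ^ 2 + (1 - 2 * x) * Real.sinh (2 * x)
      - (1 + 6 * x) * Real.cosh (2 * x)) x := by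
  have h2x : HasDerivAt (fun t : ℝ => 2 * t) 2 x := by
    simpa using (hasDerivAt_id' x).const_mul 2
  have h := (((hasDerivAt_id' x).const_sub 2).mul
    ((h2x.cosh.const_add 1).sub (((hasDerivAt_pow 2 x).const_sub R).const_mul 2))).sub
    (((hasDerivAt_id' x).const_mul 3).mul h2x.sinh)
  exact h.congr_deriv (by simp only [Pi.sub_apply]; ring)

lemma beanPsi_strictAntiOn {R : ℝ} (hR : R ≤ 1) : StrictAntiOn (beanPsi R) (Set.Ici (1 / 2)) := by
  refine strictAntiOn_of_deriv_neg (convex_Ici _)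
    (fun x _ => (hasDerivAt_beanPsi R x).continuousAt.continuousWithinAt) fun x hx => ?_
  rw [interior_Ici, Set.mem_Ioi] at hx
  rw [(hasDerivAt_beanPsi R x).deriv]
  have hsinh := mul_nonpos_of_nonpos_of_nonneg (by linarith : 1 - 2 * x ≤ 0)
    (Real.sinh_nonneg_iff.2 (by linarith : 0 ≤ 2 * x))
  have hcosh := mul_le_mul_of_nonneg_left (Real.one_le_cosh (2 * x)) (by linarith : 0 ≤ 1 + 6 * x)
  nlinarith

lemma beanPsi_le_neg {R s : ℝ} (hR : R ≤ 1) (hs : 0 ≤ s) : beanPsi R s ≤ beanPsi R (-s) := by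
  have h := mul_nonneg hs (by nlinarith [Real.one_le_cosh (2 * s)] :
    0 ≤ 1 + Real.cosh (2 * s) - 2 * (R - s ^ 2))
  simp only [beanPsi, mul_neg, Real.cosh_neg, Real.sinh_neg, neg_sq]
  nlinarith

lemma beanPsi_nonneg {R r x : ℝ} (hR : R ≤ 9 / 16) (hr : 0 ≤ beanPsi R r) (hx : |x| ≤ r) :
    0 ≤ beanPsi R x := by
  wlog hx₀ : 0 ≤ x generalizing x
  · exact (this (by rwa [abs_neg]) (by linarith)).trans
      (by simpa using beanPsi_le_neg (by linarith) (by linarith : 0 ≤ -x))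
  rw [abs_of_nonneg hx₀] at hx
  rcases le_or_gt x (1 / 2) with h | h
  · exact (beanPsi_pos_of_le_half hR hx₀ h).le
  · exact hr.trans ((beanPsi_strictAntiOn (by linarith)).antitoneOn (Set.mem_Ici.2 h.le)
      (Set.mem_Ici.2 (h.le.trans hx)) hx)

lemma beanPsi_lt_of_sq_add_sq_lt {R x y : ℝ} (hxy : x ^ 2 + y ^ 2 < R) (hx : x < 2)
    (hy : |y| ≤ Real.pi / 2) :
    beanPsi R x < (2 - x) * (Real.cosh (2 * x) + Real.cos (2 * y)) - 3 * x * Real.sinh (2 * x)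
      + 3 * y * Real.sin (2 * y) := by
  have hcos := mul_le_mul_of_nonneg_left
    (by nlinarith [Real.one_sub_sq_div_two_le_cos (x := 2 * y)] : 1 - 2 * y ^ 2 ≤ Real.cos (2 * y))
    (by linarith : 0 ≤ 2 - x)
  have hsin : 0 ≤ y * Real.sin (2 * y) := by
    rcases abs_le.1 hy with ⟨hy₁, hy₂⟩
    rcases le_total 0 y with h | h
    · exact mul_nonneg h (Real.sin_nonneg_of_nonneg_of_le_pi (by linarith) (by linarith))
    · exact mul_nonneg_of_nonpos_of_nonpos h
        (Real.sin_nonpos_of_nonpos_of_neg_pi_le (by linarith) (by linarith))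
  have hgap := mul_pos (by linarith : 0 < 2 - x) (by linarith : 0 < R - x ^ 2 - y ^ 2)
  rw [beanPsi]
  nlinarith

lemma Complex.two_mul_cosh_mul_conj_cosh (z : ℂ) :
    2 * (cosh z * conj (cosh z)) = ↑(Real.cosh (2 * z.re) + Real.cos (2 * z.im)) := by
  have h := congr($(cosh_add z (conj z)) + $(cosh_sub z (conj z)))
  rw [add_conj, sub_conj, cosh_mul_I, ← ofReal_cosh, ← ofReal_cos, cosh_conj] at h
  rw [ofReal_add, h]
  ring

lemma Complex.two_mul_sinh_mul_conj_cosh (z : ℂ) :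
    2 * (sinh z * conj (cosh z)) = Real.sinh (2 * z.re) + Real.sin (2 * z.im) * I := by
  have h := congr($(sinh_add z (conj z)) + $(sinh_sub z (conj z)))
  rw [add_conj, sub_conj, sinh_mul_I, ← ofReal_sinh, ← ofReal_sin, cosh_conj] at h
  rw [h]
  ring

lemma Complex.tanh_eq_sinh_add_sin_mul_I_div (z : ℂ) :
    tanh z = (Real.sinh (2 * z.re) + Real.sin (2 * z.im) * I) /
      ↑(Real.cosh (2 * z.re) + Real.cos (2 * z.im)) := by
  rw [← two_mul_cosh_mul_conj_cosh, ← two_mul_sinh_mul_conj_cosh, tanh_eq_sinh_div_cosh]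
  rcases eq_or_ne (cosh z) 0 with h | h
  · simp [h]
  · rw [mul_div_mul_left _ _ two_ne_zero, mul_div_mul_right _ _ ((map_ne_zero _).2 h)]

lemma Complex.cosh_ne_zero_of_cos_pos {z : ℂ} (hz : 0 < Real.cos (2 * z.im)) : cosh z ≠ 0 := by
  intro h
  have := two_mul_cosh_mul_conj_cosh z
  rw [h, zero_mul, mul_zero, eq_comm, ofReal_eq_zero] at this
  linarith [Real.one_le_cosh (2 * z.re)]

lemma Complex.re_one_add_tanh_pos {z : ℂ} (hz : 0 < Real.cos (2 * z.im)) :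
    0 < (1 + tanh z).re := by
  have hD : 0 < Real.cosh (2 * z.re) + Real.cos (2 * z.im) := by
    linarith [Real.one_le_cosh (2 * z.re)]
  rw [tanh_eq_sinh_add_sin_mul_I_div, add_re, div_ofReal_re, one_re, one_add_div hD.ne',
    add_re, ofReal_re, mul_re, I_re, I_im, ofReal_re, ofReal_im]
  have := Real.exp_pos (2 * z.re)
  rw [← Real.cosh_add_sinh] at this
  apply div_pos _ hD
  linarith

lemma Complex.re_one_sub_tanh_pos {z : ℂ} (hz : 0 < Real.cos (2 * z.im)) :
    0 < (1 - tanh z).re := by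
  simpa [sub_eq_add_neg, ← tanh_neg] using re_one_add_tanh_pos (z := -z) (by simpa using hz)

lemma Complex.hasDerivAt_tanh {z : ℂ} (hz : cosh z ≠ 0) : HasDerivAt tanh (1 - tanh z ^ 2) z := by
  have h := (hasDerivAt_sinh z).div (hasDerivAt_cosh z) hz
  rw [show tanh = fun w => sinh w / cosh w from funext tanh_eq_sinh_div_cosh]
  exact h.congr_deriv (by field_simp)

lemma hasDerivAt_Bean {z : ℂ} (hz : 0 < Real.cos (2 * z.im)) :
    HasDerivAt Bean ((1 - tanh z) * Bean z / 2) z := by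
  have hslit : 1 + tanh z ∈ slitPlane := Or.inl (re_one_add_tanh_pos hz)
  have h := ((hasDerivAt_tanh (cosh_ne_zero_of_cos_pos hz)).const_add 1).cpow_const
    (c := 1 / 2) hslit
  refine h.congr_deriv ?_
  rw [Bean, cpow_sub _ _ (slitPlane_ne_zero hslit), cpow_one]
  field_simp [slitPlane_ne_zero hslit]
  ring

lemma deriv_deriv_Bean {z : ℂ} (hz : 0 < Real.cos (2 * z.im)) :
    deriv (deriv Bean) z = -(deriv Bean z * (1 + 3 * tanh z) / 2) := by
  have hopen : IsOpen {w : ℂ | 0 < Real.cos (2 * w.im)} :=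
    isOpen_lt continuous_const (Real.continuous_cos.comp (continuous_const.mul continuous_im))
  have heq : deriv Bean =ᶠ[nhds z] fun w => (1 - tanh w) * Bean w / 2 :=
    Filter.eventually_of_mem (hopen.mem_nhds hz) fun w hw => (hasDerivAt_Bean hw).deriv
  rw [heq.deriv_eq, (hasDerivAt_Bean hz).deriv]
  have h := ((((hasDerivAt_tanh (cosh_ne_zero_of_cos_pos hz)).const_sub 1).mul
    (hasDerivAt_Bean hz)).div_const 2)
  exact h.deriv.trans (by ring)

lemma one_add_mul_deriv_deriv_Bean_div {z : ℂ} (hz : 0 < Real.cos (2 * z.im)) :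
    1 + z * deriv (deriv Bean) z / deriv Bean z = 1 - z * (1 + 3 * tanh z) / 2 := by
  have hB : Bean z ≠ 0 := by
    rw [Bean, Ne, cpow_eq_zero_iff]
    exact fun h => (slitPlane_ne_zero (Or.inl (re_one_add_tanh_pos hz))) h.1
  have h1 : 1 - tanh z ≠ 0 := fun h => by simpa [h] using re_one_sub_tanh_pos hz
  rw [deriv_deriv_Bean hz, (hasDerivAt_Bean hz).deriv]
  field_simp
  ring

lemma re_one_add_mul_deriv_deriv_Bean_div {z : ℂ} (hz : 0 < Real.cos (2 * z.im)) :
    (1 + z * deriv (deriv Bean) z / deriv Bean z).re =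
      ((2 - z.re) * (Real.cosh (2 * z.re) + Real.cos (2 * z.im))
        - 3 * z.re * Real.sinh (2 * z.re) + 3 * z.im * Real.sin (2 * z.im)) /
      (2 * (Real.cosh (2 * z.re) + Real.cos (2 * z.im))) := by
  set D := Real.cosh (2 * z.re) + Real.cos (2 * z.im) with hD_def
  have hD : 0 < D := by linarith [Real.one_le_cosh (2 * z.re)]
  have h : (1 + z * deriv (deriv Bean) z / deriv Bean z) * ↑(2 * D) =
      ↑(2 * D) - z * (D + 3 * (Real.sinh (2 * z.re) + Real.sin (2 * z.im) * I)) := by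
    rw [one_add_mul_deriv_deriv_Bean_div hz, tanh_eq_sinh_add_sin_mul_I_div, ← hD_def,
      ofReal_mul, ofReal_ofNat]
    field_simp [ofReal_ne_zero.2 hD.ne']
  rw [eq_div_iff (by positivity), ← re_mul_ofReal, h]
  simp only [sub_re, mul_re, add_re, ofReal_re, ofReal_im, I_re, I_im, mul_im, add_im, re_ofNat,
    im_ofNat]
  ring

theorem beanConvexRadius_general (rstar : ℝ)
    (hroot : beanPhi rstar = 0)
    (hpos : ∀ r : ℝ, 0 ≤ r → r < rstar → 0 < beanPhi r) :
    ∀ z : ℂ, ‖z‖ < rstar →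
      0 < (1 + z * deriv (deriv Bean) z / deriv Bean z).re := by
  intro z hz
  have hr : rstar < 3 / 4 := lt_three_quarters_of_beanPhi_eq_zero hroot hpos
  have hψr : beanPsi (rstar ^ 2) rstar = 0 := by
    simpa [beanPhi_eq_exp_mul_beanPsi, (Real.exp_pos _).ne'] using hroot
  have hre : |z.re| ≤ rstar := (abs_re_le_norm z).trans hz.le
  have him : |z.im| < 3 / 4 := ((abs_im_le_norm z).trans_lt hz).trans hr
  have hsq : z.re ^ 2 + z.im ^ 2 < rstar ^ 2 := by
    rw [sq, sq, ← normSq_apply, ← Complex.sq_norm]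
    exact pow_lt_pow_left₀ hz (norm_nonneg z) two_ne_zero
  have hψ : 0 ≤ beanPsi (rstar ^ 2) z.re :=
    beanPsi_nonneg (by nlinarith [(abs_nonneg z.re).trans hre]) hψr.ge hre
  have hcos : 0 < Real.cos (2 * z.im) := by
    obtain ⟨h₁, h₂⟩ := abs_lt.1 him
    exact Real.cos_pos_of_mem_Ioo ⟨by linarith [Real.pi_gt_three], by linarith [Real.pi_gt_three]⟩
  rw [re_one_add_mul_deriv_deriv_Bean_div hcos]
  refine div_pos (hψ.trans_lt (beanPsi_lt_of_sq_add_sq_lt hsq ?_ ?_)) ?_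
  · linarith [abs_le.1 hre]
  · linarith [Real.pi_gt_three]
  · linarith [Real.one_le_cosh (2 * z.re)]

/-- 𝔅 is convex on |z| < r*, where r* is the smallest positive root of φ. -/
theorem beanConvexRadius (rstar : ℝ) (h0 : 0 < rstar) (h1 : rstar < 1)
    (hroot : beanPhi rstar = 0)
    (hpos : ∀ r : ℝ, 0 ≤ r → r < rstar → 0 < beanPhi r) :
    ∀ z : ℂ, ‖z‖ < rstar →
      0 < (1 + z * deriv (deriv Bean) z / deriv Bean z).re :=
  beanConvexRadius_general rstar hroot hpos
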